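/- arXiv:2410.00065 — 2 statements merged into one kernel-verified Lean document; each statement's English description precedes it below -/
import Mathlib

section
/- Counting of Conway cuts over a finite linear order: let α be a linearly ordered finite type with exactly n elements, where 1 ≤ n. Then the number of pairs (L, R) of finite subsets of α such that every element of L is strictly less than every element of R equals (n + 2) * 2^(n - 1). -/
theorem count_conway_cuts (α : Type*) [Fintype α] [LinearOrder α] (n : ℕ)
    (hn : 1 ≤ n) (hcard : Fintype.card α = n) :
    Nat.card {p : Finset α × Finset α // ∀ l ∈ p.1, ∀ r ∈ p.2, l < r} =
      (n + 2) * 2 ^ (n - 1) := by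
  classical
  have hne : Nonempty α := Fintype.card_pos_iff.mp (by omega)
  set d : α := Classical.arbitrary α with hd
  -- reduce Nat.card to a sum over L
  rw [Nat.card_eq_fintype_card]
  rw [Fintype.card_congr (Equiv.subtypeProdEquivSigmaSubtype
      (fun L R : Finset α => ∀ l ∈ L, ∀ r ∈ R, l < r))]
  rw [Fintype.card_sigma]
  have hinner : ∀ L : Finset α,
      Fintype.card {R : Finset α // ∀ l ∈ L, ∀ r ∈ R, l < r}
        = 2 ^ (Finset.univ.filter (fun x => ∀ l ∈ L, l < x)).card := by
    intro L
    rw [Fintype.card_subtype]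
    rw [show (Finset.univ.filter (fun R : Finset α => ∀ l ∈ L, ∀ r ∈ R, l < r))
        = (Finset.univ.filter (fun x => ∀ l ∈ L, l < x)).powerset by
      ext R
      simp only [Finset.mem_filter, Finset.mem_univ, true_and, Finset.mem_powerset,
        Finset.subset_iff]
      constructor
      · exact fun h r hr l hl => h l hl r hr
      · exact fun h l hl r hr => h hr l hl]
    rw [Finset.card_powerset]
  simp_rw [hinner]
  -- split off the empty set
  rw [← Finset.sum_filter_add_sum_filter_not Finset.univ (fun L : Finset α => L.Nonempty)]
  have hempty : (Finset.univ.filter (fun L : Finset α => ¬ L.Nonempty)) = {∅} := by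
    ext L
    simp [Finset.not_nonempty_iff_eq_empty]
  rw [hempty]
  rw [Finset.sum_singleton]
  have h0 : (Finset.univ.filter (fun x : α => ∀ l ∈ (∅ : Finset α), l < x)).card = n := by
    simp [hcard]
  rw [h0]
  -- key card fact
  have hkey : ∀ m : α, (Finset.univ.filter (fun x : α => x < m)).card
      + (Finset.univ.filter (fun x : α => m < x)).card = n - 1 := by
    intro m
    rw [← Finset.card_union_of_disjoint]
    · have : (Finset.univ.filter (fun x : α => x < m))
          ∪ (Finset.univ.filter (fun x : α => m < x)) = Finset.univ.erase m := by
        ext x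
        simp only [Finset.mem_union, Finset.mem_filter, Finset.mem_univ, true_and,
          Finset.mem_erase, and_true]
        constructor
        · rintro (h | h) <;> [exact h.ne; exact h.ne']
        · exact fun h => h.lt_or_gt
      rw [this, Finset.card_erase_of_mem (Finset.mem_univ m), Finset.card_univ, hcard]
    · rw [Finset.disjoint_left]
      intro x hx hx'
      simp only [Finset.mem_filter, Finset.mem_univ, true_and] at hx hx'
      exact absurd (hx.trans hx') (lt_irrefl x)
  -- handle the nonempty sum via a bijection with sigma
  have hsum : ∑ L ∈ Finset.univ.filter (fun L : Finset α => L.Nonempty),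
      2 ^ (Finset.univ.filter (fun x => ∀ l ∈ L, l < x)).card = n * 2 ^ (n - 1) := by
    rw [Finset.sum_nbij' (i := fun L : Finset α => (⟨WithBot.unbotD d L.max, L.erase (WithBot.unbotD d L.max)⟩ :
          Σ m : α, Finset α))
        (j := fun p : Σ m : α, Finset α => insert p.1 p.2)
        (t := (Finset.univ : Finset α).sigma
          (fun m => (Finset.univ.filter (fun x : α => x < m)).powerset))
        (g := fun p : Σ m : α, Finset α =>
          2 ^ (Finset.univ.filter (fun x : α => p.1 < x)).card)]
    · rw [Finset.sum_sigma]
      have : ∀ m : α, ∑ S ∈ (Finset.univ.filter (fun x : α => x < m)).powerset,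
          2 ^ (Finset.univ.filter (fun x : α => m < x)).card = 2 ^ (n - 1) := by
        intro m
        rw [Finset.sum_const, Finset.card_powerset, smul_eq_mul, ← pow_add, hkey m]
      rw [Finset.sum_congr rfl (fun m _ => this m), Finset.sum_const, Finset.card_univ, hcard,
        smul_eq_mul]
    · -- i maps into t
      intro L hL
      simp only [Finset.mem_filter, Finset.mem_univ, true_and] at hL
      obtain ⟨m, hm⟩ := Finset.max_of_nonempty hL
      simp only [hm, WithBot.unbotD_coe, Finset.mem_sigma, Finset.mem_univ, true_and,
        Finset.mem_powerset]
      intro x hx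
      simp only [Finset.mem_filter, Finset.mem_univ, true_and]
      exact lt_of_le_of_ne (Finset.le_max_of_eq (Finset.mem_of_mem_erase hx) hm)
        (Finset.ne_of_mem_erase hx)
    · -- j maps into s
      intro p hp
      simp only [Finset.mem_filter, Finset.mem_univ, true_and]
      exact ⟨p.1, Finset.mem_insert_self _ _⟩
    · -- left inverse
      intro L hL
      simp only [Finset.mem_filter, Finset.mem_univ, true_and] at hL
      obtain ⟨m, hm⟩ := Finset.max_of_nonempty hL
      simp only [hm, WithBot.unbotD_coe]
      exact Finset.insert_erase (Finset.mem_of_max hm)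
    · -- right inverse
      rintro ⟨m, S⟩ hp
      simp only [Finset.mem_sigma, Finset.mem_univ, true_and, Finset.mem_powerset] at hp
      have hmS : m ∉ S := by
        intro h
        have := hp h
        simp only [Finset.mem_filter] at this
        exact absurd this.2 (lt_irrefl m)
      have hmax : (insert m S).max = (m : WithBot α) := by
        rw [Finset.max_insert]
        refine max_eq_left ?_
        refine Finset.max_le ?_
        intro b hb
        have := hp hb
        simp only [Finset.mem_filter, Finset.mem_univ, true_and] at this
        exact_mod_cast this.le
      simp only [hmax, WithBot.unbotD_coe]
      rw [Finset.erase_insert hmS]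
    · -- summand equality
      intro L hL
      simp only [Finset.mem_filter, Finset.mem_univ, true_and] at hL
      obtain ⟨m, hm⟩ := Finset.max_of_nonempty hL
      simp only [hm, WithBot.unbotD_coe]
      congr 1
      congr 1
      ext x
      simp only [Finset.mem_filter, Finset.mem_univ, true_and]
      constructor
      · intro h
        exact h m (Finset.mem_of_max hm)
      · intro h l hl
        exact lt_of_le_of_lt (Finset.le_max_of_eq hl hm) h
  rw [hsum]
  ring_nf
  have h2 : 2 ^ n = 2 * 2 ^ (n - 1) := by
    conv_lhs => rw [show n = (n - 1) + 1 by omega]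
    ring
  rw [h2]
  ring
end

section
/- Transfinite recursion for monotone domains: let α and γ be types with γ nonempty, let X : Ordinal → Set α be monotone (β ≤ β' implies X β ⊆ X β'), and let H : α → (Ordinal → α → γ) → γ be local in the sense that for every x : α, every ordinal β with x ∈ X β, and all S S' : Ordinal → α → γ that agree at every pair (δ, y) with δ < β and y ∈ X δ, one has H x S = H x S'. Then for every ordinal θ there exists S : Ordinal → α → γ such that S β x = H x S for all β ≤ θ and all x ∈ X β; moreover S is unique on this domain: any two such functions agree at every (β, x) with β ≤ θ and x ∈ X β. -/
theorem transfinite_recursion_monotone_domains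
    {α γ : Type*} [Nonempty γ]
    (X : Ordinal → Set α)
    (hX : ∀ β β' : Ordinal, β ≤ β' → X β ⊆ X β')
    (H : α → (Ordinal → α → γ) → γ)
    (hH : ∀ (x : α) (β : Ordinal), x ∈ X β →
      ∀ S S' : Ordinal → α → γ,
        (∀ (δ : Ordinal) (y : α), δ < β → y ∈ X δ → S δ y = S' δ y) →
        H x S = H x S')
    (θ : Ordinal) :
    (∃ S : Ordinal → α → γ, ∀ β ≤ θ, ∀ x ∈ X β, S β x = H x S) ∧
    (∀ S S' : Ordinal → α → γ,
      (∀ β ≤ θ, ∀ x ∈ X β, S β x = H x S) →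
      (∀ β ≤ θ, ∀ x ∈ X β, S' β x = H x S') →
      ∀ β ≤ θ, ∀ x ∈ X β, S β x = S' β x) := by
  constructor
  · set G : Ordinal → α → γ := WellFounded.fix Ordinal.lt_wf
      (fun β ih x => H x (fun δ y => if h : δ < β then ih δ h y else Classical.arbitrary γ))
      with hGdef
    refine ⟨G, fun β hβ x hx => ?_⟩
    have hfix : G β x
        = H x (fun δ y => if h : δ < β then G δ y else Classical.arbitrary γ) := by
      conv_lhs => rw [hGdef, WellFounded.fix_eq]
    rw [hfix]
    exact hH x β hx _ G (fun δ y hδ hy => by simp [hδ])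
  · intro S S' hS hS' β hβ x hx
    induction β using Ordinal.induction generalizing x with
    | h β ih =>
      rw [hS β hβ x hx, hS' β hβ x hx]
      exact hH x β hx S S' (fun δ y hδ hy => ih δ hδ (hδ.le.trans hβ) y hy)
end
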